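/- (Chaudhuri–Dasgupta) If η is (α,A)-smooth in (X,ρ,μ), then for any p ∈ [0,1] and Δ ∈ (0,1/2], the effective decision boundary satisfies ∂_{p,Δ} ⊂ ∂η_{Δ + A p^α}, i.e., every point of ∂_{p,Δ} lies in the decision boundary with margin Δ + A p^α. -/
import Mathlib


open MeasureTheory Metric Filter
open scoped ENNReal NNReal BigOperators Topology Classical

noncomputable section

namespace SplitNN

variable {X : Type*} [MetricSpace X] [MeasurableSpace X]

/-- The indices of the sample `s` sorted in increasing order of the distance to the query
point `x` (ties broken arbitrarily, here by stability of merge sort). -/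
def nnSorted {n : ℕ} (x : X) (s : Fin n → X) : List (Fin n) :=
  (List.finRange n).mergeSort (fun i j => decide (dist x (s i) ≤ dist x (s j)))

/-- `nnDist j x s` is the distance from `x` to its `j`-th nearest neighbor in `s` (`j ≥ 1`). -/
def nnDist {n : ℕ} (j : ℕ) (x : X) (s : Fin n → X) : ℝ :=
  ((nnSorted x s).map (fun i => dist x (s i))).getD (j - 1) 0

/-- The standard `k`-NN regression estimate on the dataset `d`: the average of the labels of
the `k` nearest neighbors of `x`. -/
def kNN {n : ℕ} (k : ℕ) (x : X) (d : Fin n → X × ℝ) : ℝ :=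
  ((((nnSorted x (fun i => (d i).1)).take k).map (fun i => (d i).2)).sum) / k

/-- The `(M,k)`-NN split regression estimate: the average of the `k`-NN estimates over the
`M` data splits. -/
def splitKNN {M n : ℕ} (k : ℕ) (D : Fin M → Fin n → X × ℝ) (x : X) : ℝ :=
  (∑ m : Fin M, kNN k x (D m)) / M

/-- The indices of the data splits, sorted in increasing order of the `j`-th nearest-neighbor
distance of `x` within the split. -/
def splitSorted {M n : ℕ} (j : ℕ) (D : Fin M → Fin n → X) (x : X) : List (Fin M) :=
  (List.finRange M).mergeSort
    (fun a b => decide (nnDist j x (D a) ≤ nnDist j x (D b)))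

/-- The `(M,L,k)`-NN (split-and-select) regression estimate: average of the `k`-NN estimates
over the `L` splits with the smallest `(k+1)`-th NN distance from `x`. -/
def selKNN {M n : ℕ} (k L : ℕ) (D : Fin M → Fin n → X × ℝ) (x : X) : ℝ :=
  ((((splitSorted (k+1) (fun m i => (D m i).1) x).take L).map
      (fun m => kNN k x (D m))).sum) / L

/-- The `(M,k)`-NN classifier: plug-in classifier of the `(M,k)`-NN regression estimate. -/
def splitCls {M n : ℕ} (k : ℕ) (D : Fin M → Fin n → X × ℝ) (x : X) : Bool :=
  decide ((1:ℝ)/2 ≤ splitKNN k D x)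

/-- The `(M,L,k)`-NN classifier. -/
def selCls {M n : ℕ} (k L : ℕ) (D : Fin M → Fin n → X × ℝ) (x : X) : Bool :=
  decide ((1:ℝ)/2 ≤ selKNN k L D x)

/-- The Bayes classifier `g(x) = 1{η(x) ≥ 1/2}`. -/
def bayesCls (η : X → ℝ) (x : X) : Bool := decide ((1:ℝ)/2 ≤ η x)

/-- Law of the split data: `M` independent splits, each made of `n` i.i.d. draws from the
joint distribution `P` of a data pair. -/
def dataMeasure (P : Measure (X × ℝ)) (M n : ℕ) : Measure (Fin M → Fin n → X × ℝ) :=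
  Measure.pi (fun _ => Measure.pi (fun _ => P))

/-- Joint law of a pair `(X,Y)` with `X ~ μ` and `Y | X = x ~ Bernoulli(η(x))`,
with labels `0,1 ∈ ℝ`. -/
def joint (μ : Measure X) (η : X → ℝ) : Measure (X × ℝ) :=
  μ.bind (fun x => ENNReal.ofReal (η x) • Measure.dirac (x, (1:ℝ))
    + ENNReal.ofReal (1 - η x) • Measure.dirac (x, (0:ℝ)))

/-- Support of a measure. -/
def msupport (μ : Measure X) : Set X := {x | ∀ r : ℝ, 0 < r → 0 < μ (ball x r)}

/-- The probability radius `r_p(x) = inf {r > 0 : μ(B(x,r)) ≥ p}`. -/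
def probRadius (μ : Measure X) (p : ℝ) (x : X) : ℝ :=
  sInf {r : ℝ | 0 < r ∧ p ≤ (μ (closedBall x r)).toReal}

/-- Average of `η` over a set `A`: `η(A) = (1/μ(A)) ∫_A η dμ`. -/
def avg (μ : Measure X) (η : X → ℝ) (A : Set X) : ℝ :=
  (∫ x in A, η x ∂μ) / (μ A).toReal

/-- `Ŷ(A; d)`: average of the labels of the sample points that lie in `A`. -/
def labelAvg {n : ℕ} (d : Fin n → X × ℝ) (A : Set X) : ℝ :=
  (∑ i : Fin n, if (d i).1 ∈ A then (d i).2 else 0) /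
    (∑ i : Fin n, if (d i).1 ∈ A then (1:ℝ) else 0)

/-- Risk (misclassification probability) of the classifier `g`. -/
def risk (μ : Measure X) (η : X → ℝ) (g : X → Bool) : ℝ :=
  ∫ x, (if g x then 1 - η x else η x) ∂μ

/-- The Bayes risk `R* = E[min(η, 1-η)]`. -/
def bayesRisk (μ : Measure X) (η : X → ℝ) : ℝ :=
  ∫ x, min (η x) (1 - η x) ∂μ

/-- Effective interior of class 1. -/
def Xplus (μ : Measure X) (η : X → ℝ) (p Δ : ℝ) : Set X :=
  {x | x ∈ msupport μ ∧ 1/2 < η x ∧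
    ∀ r : ℝ, 0 < r → r ≤ probRadius μ p x → 1/2 + Δ ≤ avg μ η (closedBall x r)}

/-- Effective interior of class 0. -/
def Xminus (μ : Measure X) (η : X → ℝ) (p Δ : ℝ) : Set X :=
  {x | x ∈ msupport μ ∧ η x < 1/2 ∧
    ∀ r : ℝ, 0 < r → r ≤ probRadius μ p x → avg μ η (closedBall x r) ≤ 1/2 - Δ}

/-- The effective decision boundary `∂_{p,Δ}`. -/
def effBdry (μ : Measure X) (η : X → ℝ) (p Δ : ℝ) : Set X :=
  msupport μ \ (Xplus μ η p Δ ∪ Xminus μ η p Δ)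

/-- The decision boundary with margin `Δ`: `∂η_Δ`. -/
def marginBdry (μ : Measure X) (η : X → ℝ) (Δ : ℝ) : Set X :=
  {x | x ∈ msupport μ ∧ |η x - 1/2| ≤ Δ}

/-- `μ` is `(C_d, d)`-homogeneous. -/
def Homogeneous (μ : Measure X) (C_d d : ℝ) : Prop :=
  ∀ x ∈ msupport μ, ∀ r : ℝ, 0 < r → min (C_d * r ^ d) 1 ≤ (μ (ball x r)).toReal

/-- `μ` is a doubling measure with exponent `d`. -/
def Doubling (μ : Measure X) (d : ℝ) : Prop :=
  ∀ x ∈ msupport μ, ∀ r : ℝ, 0 < r →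
    μ (ball x r) ≤ ENNReal.ofReal ((2:ℝ) ^ d) * μ (ball x (r/2))

/-- `η` is `(α, A)`-Hölder continuous. -/
def Holder (η : X → ℝ) (α A : ℝ) : Prop :=
  ∀ x y : X, |η x - η y| ≤ A * dist x y ^ α

/-- `η` is `(α, A)`-smooth in the metric measure space `(X, ρ, μ)`. -/
def Smooth (μ : Measure X) (η : X → ℝ) (α A : ℝ) : Prop :=
  ∀ x ∈ msupport μ, ∀ r : ℝ, 0 < r →
    |avg μ η (closedBall x r) - η x| ≤ A * ((μ (ball x r)).toReal) ^ α

/-- `η` satisfies the `β`-margin condition with constant `C`. -/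
def Margin (μ : Measure X) (η : X → ℝ) (β C : ℝ) : Prop :=
  ∀ Δ : ℝ, 0 < Δ → Δ ≤ 1/2 → (μ (marginBdry μ η Δ)).toReal ≤ C * Δ ^ β

/-- The VC dimension of the collection `𝒞` of subsets of `X` is at most `V`. -/
def VCDimLE (𝒞 : Set (Set X)) (V : ℕ) : Prop :=
  ∀ s : Finset X, (∀ t ⊆ s, ∃ A ∈ 𝒞, ∀ x ∈ s, x ∈ A ↔ x ∈ t) → s.card ≤ V

/-- The collection of closed balls of `X` has VC dimension at most `V`. -/
def BallsVCDimLE (X : Type*) [MetricSpace X] (V : ℕ) : Prop :=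
  VCDimLE {A : Set X | ∃ (x : X) (r : ℝ), A = closedBall x r} V

/-- `η` is (a version of) the conditional expectation `E[Y | X = x]` under the joint law `P`,
whose `X`-marginal is `μ`. -/
def IsCondMean (P : Measure (X × ℝ)) (μ : Measure X) (η : X → ℝ) : Prop :=
  P.map Prod.fst = μ ∧
    ∀ A : Set X, MeasurableSet A →
      ∫ q in A ×ˢ (Set.univ : Set ℝ), q.2 ∂P = ∫ x in A, η x ∂μ

/-- The conditional variance `Var(Y | X = x)` is bounded by `V` in the integrated sense. -/
def CondVarBdd (P : Measure (X × ℝ)) (η : X → ℝ) (V : ℝ) : Prop :=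
  ∀ A : Set X, MeasurableSet A →
    ∫ q in A ×ˢ (Set.univ : Set ℝ), (q.2 - η q.1) ^ 2 ∂P ≤ V * (P (A ×ˢ Set.univ)).toReal

end SplitNN

lemma ball_eq_iUnion_closedBall' {X : Type*} [MetricSpace X] (x : X) (r : ℝ) (hr : 0 < r) :
    ball x r = ⋃ n : ℕ, closedBall x (r - r / (n + 2)) := by
  ext y
  simp only [mem_ball, Set.mem_iUnion, mem_closedBall]
  constructor
  · intro h
    have hε : 0 < r - dist y x := by linarith
    obtain ⟨n, hn⟩ := exists_nat_gt (r / (r - dist y x))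
    have hn0 : 0 < (n : ℝ) + 2 := by positivity
    have : r / ((n : ℝ) + 2) < r - dist y x := by
      rw [div_lt_iff₀ hn0]
      have h1 : r / (r - dist y x) < (n : ℝ) + 2 := by linarith
      calc r = (r / (r - dist y x)) * (r - dist y x) := by field_simp
        _ < ((n : ℝ) + 2) * (r - dist y x) := mul_lt_mul_of_pos_right h1 hε
        _ = (r - dist y x) * ((n : ℝ) + 2) := by ring
    exact ⟨n, by linarith⟩
  · rintro ⟨n, hn⟩
    have hn0 : 0 < (n : ℝ) + 2 := by positivity
    have : 0 < r / ((n : ℝ) + 2) := by positivity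
    linarith

lemma measure_ball_le_of_le_probRadius' {X : Type*} [MetricSpace X] [MeasurableSpace X]
    (μ : Measure X) [IsFiniteMeasure μ] (p : ℝ) (hp0 : 0 ≤ p) (x : X) (r : ℝ) (hr : 0 < r)
    (hrle : r ≤ SplitNN.probRadius μ p x) : (μ (ball x r)).toReal ≤ p := by
  by_contra h
  push_neg at h
  have hfin : μ (ball x r) ≠ ⊤ := measure_ne_top _ _
  have hlt : ENNReal.ofReal p < μ (ball x r) :=
    (ENNReal.ofReal_lt_iff_lt_toReal hp0 hfin).2 h
  have hmono : Monotone (fun n : ℕ => closedBall x (r - r / (n + 2))) := by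
    intro a b hab
    apply closedBall_subset_closedBall
    have ha : (0:ℝ) < (a:ℝ) + 2 := by positivity
    have hb : (0:ℝ) < (b:ℝ) + 2 := by positivity
    have : r / ((b:ℝ) + 2) ≤ r / ((a:ℝ) + 2) := by
      apply div_le_div_of_nonneg_left hr.le ha
      have hab' : (a:ℝ) ≤ b := Nat.cast_le.2 hab
      linarith
    linarith
  have hU := ball_eq_iUnion_closedBall' x r hr
  have hdir : Directed (· ⊆ ·) (fun n : ℕ => closedBall x (r - r / (n + 2))) :=
    hmono.directed_le
  have hsup : μ (ball x r) = ⨆ n : ℕ, μ (closedBall x (r - r / (n + 2))) := by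
    rw [hU]; exact hdir.measure_iUnion
  rw [hsup, lt_iSup_iff] at hlt
  obtain ⟨n, hn⟩ := hlt
  have hn0 : (0:ℝ) < (n : ℝ) + 2 := by positivity
  have hrpos : 0 < r - r / ((n:ℝ) + 2) := by
    have h1 : r / ((n:ℝ) + 2) ≤ r / 2 := by
      apply div_le_div_of_nonneg_left hr.le (by norm_num); linarith
    linarith
  have hmem : r - r / ((n:ℝ) + 2) ∈
      {s : ℝ | 0 < s ∧ p ≤ (μ (closedBall x s)).toReal} := by
    refine ⟨hrpos, ?_⟩
    have := (ENNReal.ofReal_lt_iff_lt_toReal hp0 (measure_ne_top _ _)).1 hn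
    linarith
  have hle : SplitNN.probRadius μ p x ≤ r - r / ((n:ℝ) + 2) :=
    csInf_le ⟨0, fun s hs => hs.1.le⟩ hmem
  have : 0 < r / ((n:ℝ) + 2) := by positivity
  linarith


/-- **Lemma (Chaudhuri–Dasgupta, Lemma 18).** If `η` is `(α,A)`-smooth in `(X,ρ,μ)`, then
for any `p ∈ [0,1]` and `Δ ∈ (0,1/2]` the effective decision boundary satisfies
`∂_{p,Δ} ⊆ ∂η_{Δ + A p^α}`. -/
theorem effBdry_subset_marginBdry
    {X : Type*} [MetricSpace X] [MeasurableSpace X] [BorelSpace X]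
    (μ : Measure X) [IsProbabilityMeasure μ]
    (η : X → ℝ) (hηm : Measurable η) (hη01 : ∀ x, η x ∈ Set.Icc (0:ℝ) 1)
    (α A : ℝ) (hα0 : 0 < α) (hα1 : α ≤ 1) (hA : 0 < A)
    (hsmooth : SplitNN.Smooth μ η α A)
    (p Δ : ℝ) (hp : p ∈ Set.Icc (0:ℝ) 1) (hΔ : Δ ∈ Set.Ioc (0:ℝ) (1/2)) :
    SplitNN.effBdry μ η p Δ ⊆ SplitNN.marginBdry μ η (Δ + A * p ^ α) := by
  intro x hx
  obtain ⟨hsupp, hnot⟩ := hx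
  have hApα : 0 ≤ A * p ^ α := mul_nonneg hA.le (Real.rpow_nonneg hp.1 α)
  refine ⟨hsupp, ?_⟩
  by_contra habs
  push_neg at habs
  rw [lt_abs] at habs
  apply hnot
  rcases habs with h1 | h1
  · left
    refine ⟨hsupp, by linarith [hΔ.1], ?_⟩
    intro r hr hrle
    have hball := measure_ball_le_of_le_probRadius' μ p hp.1 x r hr hrle
    have hsm := hsmooth x hsupp r hr
    have hpow : (μ (ball x r)).toReal ^ α ≤ p ^ α :=
      Real.rpow_le_rpow ENNReal.toReal_nonneg hball hα0.le
    have habs2 : |SplitNN.avg μ η (closedBall x r) - η x| ≤ A * p ^ α :=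
      hsm.trans (mul_le_mul_of_nonneg_left hpow hA.le)
    have := (abs_le.1 habs2).1
    linarith
  · right
    refine ⟨hsupp, by linarith [hΔ.1], ?_⟩
    intro r hr hrle
    have hball := measure_ball_le_of_le_probRadius' μ p hp.1 x r hr hrle
    have hsm := hsmooth x hsupp r hr
    have hpow : (μ (ball x r)).toReal ^ α ≤ p ^ α :=
      Real.rpow_le_rpow ENNReal.toReal_nonneg hball hα0.le
    have habs2 : |SplitNN.avg μ η (closedBall x r) - η x| ≤ A * p ^ α :=
      hsm.trans (mul_le_mul_of_nonneg_left hpow hA.le)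
    have := (abs_le.1 habs2).2
    linarith
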